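/- arXiv:1004.5157 — 6 statements merged into one kernel-verified Lean document; each statement's English description precedes it below -/
import Mathlib

section
/- Let H be an m×n matrix with entries in {0,1}, and suppose H = Σ_{ℓ∈L} H_ℓ (as a sum of integer matrices) for a finite collection {H_ℓ}_{ℓ∈L} of m×n matrices with entries in {0,1}. Let {P_ℓ}_{ℓ∈L} be a collection of M×M permutation matrices, and define the mM×nM matrix H̃ = Σ_{ℓ∈L} H_ℓ ⊗ P_ℓ (Kronecker products), with rows indexed by pairs (j,a) and columns by pairs (i,b). If ω̃ = (ω̃_{(i,b)}) is a pseudo-codeword of H̃ (i.e., ω̃ ∈ P(H̃)), then the vector ω ∈ ℝ^n defined by ω_i = (1/M) Σ_{b} ω̃_{(i,b)} is a pseudo-codeword of H (i.e., ω ∈ P(H)). -/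
/-! Fix a row `j` of `H`. Every column `i ∈ N(j)` lies in exactly one `H_ℓ(i)`, so row `(j, a)`
of `H̃` has support `{(i, σ_ℓ(i)(a)) : i ∈ N(j)}`: `H̃` describes a graph cover of the Tanner
graph of `H`. Lifting an odd `S ⊆ N(j)` in the same way gives one polytope inequality of `ω̃` per
copy `a`. As `a` runs over all copies, so does `σ_ℓ(i)(a)`; hence the sum of these inequalities
is `M` times the inequality for the average `ω`. -/

/-- The fundamental polytope `P(H)` of a matrix `H` (with entries in `{0,1}`):
`ω ∈ P(H)` iff `0 ≤ ω i ≤ 1` for all `i` and for every row `j` and every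
odd-cardinality subset `S` of the support `N(j)` of row `j`,
`∑_{i ∈ S} ω i − ∑_{i ∈ N(j) \ S} ω i ≤ |S| − 1`. -/
def inFP {α β : Type} [Fintype α] [Fintype β] [DecidableEq β]
    (H : Matrix α β ℤ) (ω : β → ℝ) : Prop :=
  (∀ i, 0 ≤ ω i ∧ ω i ≤ 1) ∧
  ∀ (j : α) (S : Finset β),
    (∀ i ∈ S, H j i = 1) → Odd S.card →
    (∑ i ∈ S, ω i) - (∑ i ∈ (Finset.univ.filter fun i => H j i = 1) \ S, ω i)
      ≤ (S.card : ℝ) - 1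

open Finset

/-- `Ht` is the parity-check matrix of a graph cover of the Tanner graph of `H` with fibre `κ`:
each edge `(j, i)` lifts to the perfect matching `τ j i` between the copies of `j` and of `i`. -/
def IsGraphCover {α β κ : Type} [DecidableEq κ]
    (Ht : Matrix (α × κ) (β × κ) ℤ) (H : Matrix α β ℤ) : Prop :=
  ∃ τ : α → β → Equiv.Perm κ, ∀ j i a b, Ht (j, a) (i, b) = if τ j i a = b then H j i else 0

lemma exists_eq_single_of_sum_eq_one {ι : Type} [Fintype ι] [DecidableEq ι] {f : ι → ℤ}
    (h01 : ∀ ℓ, f ℓ = 0 ∨ f ℓ = 1) (hsum : ∑ ℓ, f ℓ = 1) : ∃ ℓ, f = Pi.single ℓ 1 := by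
  have hnonneg : ∀ ℓ, 0 ≤ f ℓ := fun ℓ => by rcases h01 ℓ with h | h <;> simp [h]
  obtain ⟨ℓ, hℓ⟩ : ∃ ℓ, f ℓ = 1 := by
    by_contra! h
    simp [fun ℓ => (h01 ℓ).resolve_right (h ℓ)] at hsum
  have hrest : ∑ ℓ' ∈ univ.erase ℓ, f ℓ' = 0 := by
    linarith [add_sum_erase univ f (mem_univ ℓ)]
  refine ⟨ℓ, funext fun ℓ' => ?_⟩
  rcases eq_or_ne ℓ' ℓ with rfl | hne
  · simp [hℓ]
  · rw [Pi.single_eq_of_ne hne]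
    exact (sum_eq_zero_iff_of_nonneg fun x _ => hnonneg x).1 hrest ℓ' (mem_erase.2 ⟨hne, mem_univ _⟩)

lemma isGraphCover_sum_kronecker {α β κ ι : Type} [DecidableEq κ] [Fintype ι]
    {H : Matrix α β ℤ} {Hl : ι → Matrix α β ℤ}
    (hH01 : ∀ j i, H j i = 0 ∨ H j i = 1) (hHl01 : ∀ ℓ j i, Hl ℓ j i = 0 ∨ Hl ℓ j i = 1)
    (hsum : H = ∑ ℓ, Hl ℓ) (σ : ι → Equiv.Perm κ) :
    IsGraphCover (∑ ℓ, Matrix.kroneckerMap (· * ·) (Hl ℓ)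
      (Matrix.of fun a b => if σ ℓ a = b then (1 : ℤ) else 0)) H := by
  classical
  suffices ∀ j i, ∃ τ : Equiv.Perm κ, ∀ a b,
      ∑ ℓ, Hl ℓ j i * (if σ ℓ a = b then 1 else 0) = if τ a = b then H j i else 0 by
    choose τ hτ using this
    refine ⟨τ, fun j i a b => ?_⟩
    simpa only [Matrix.sum_apply, Matrix.kroneckerMap_apply, Matrix.of_apply] using hτ j i a b
  intro j i
  have hHji : H j i = ∑ ℓ, Hl ℓ j i := by rw [hsum, Matrix.sum_apply]
  rcases hH01 j i with h0 | h1
  · have hzero : ∀ ℓ, Hl ℓ j i = 0 := fun ℓ =>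
      (sum_eq_zero_iff_of_nonneg fun ℓ _ => by rcases hHl01 ℓ j i with h | h <;> simp [h]).1
        (hHji ▸ h0) ℓ (mem_univ ℓ)
    exact ⟨1, fun a b => by simp [hzero, h0]⟩
  · obtain ⟨ℓ, hℓ⟩ := exists_eq_single_of_sum_eq_one (hHl01 · j i) (hHji ▸ h1)
    have hℓ' : ∀ ℓ', Hl ℓ' j i = (Pi.single ℓ 1 : ι → ℤ) ℓ' := fun ℓ' => congrFun hℓ ℓ'
    refine ⟨σ ℓ, fun a b => ?_⟩
    rw [Fintype.sum_eq_single ℓ fun ℓ' hne => by simp [hℓ', hne], hℓ', h1]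
    simp

lemma avg_mem_Icc {κ : Type} [Fintype κ] {g : κ → ℝ} (hg : ∀ b, 0 ≤ g b ∧ g b ≤ 1) :
    0 ≤ 1 / (Fintype.card κ : ℝ) * ∑ b, g b ∧ 1 / (Fintype.card κ : ℝ) * ∑ b, g b ≤ 1 := by
  refine ⟨mul_nonneg (by positivity) (sum_nonneg fun b _ => (hg b).1), ?_⟩
  rcases (Fintype.card κ).eq_zero_or_pos with hM | hM
  · simp [hM]
  rw [div_mul_eq_mul_div, one_mul, div_le_one (by positivity)]
  simpa using sum_le_sum fun b (_ : b ∈ univ) => (hg b).2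

lemma avg_sub_avg_le_of_perm {β κ : Type} [Fintype κ] {S T : Finset β} {g : β → κ → ℝ}
    (τ : β → Equiv.Perm κ) {c : ℝ} (hc : 0 ≤ c)
    (h : ∀ a, ∑ i ∈ S, g i (τ i a) - ∑ i ∈ T, g i (τ i a) ≤ c) :
    ∑ i ∈ S, 1 / (Fintype.card κ : ℝ) * ∑ b, g i b
      - ∑ i ∈ T, 1 / (Fintype.card κ : ℝ) * ∑ b, g i b ≤ c := by
  rcases (Fintype.card κ).eq_zero_or_pos with hM | hM
  · simpa [hM] using hc
  have hreindex : ∀ U : Finset β, ∑ a, ∑ i ∈ U, g i (τ i a) = ∑ i ∈ U, ∑ b, g i b := fun U => by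
    rw [sum_comm]
    exact sum_congr rfl fun i _ => Equiv.sum_comp (τ i) (g i)
  have hsum : ∑ i ∈ S, ∑ b, g i b - ∑ i ∈ T, ∑ b, g i b ≤ Fintype.card κ * c := by
    rw [← hreindex, ← hreindex, ← sum_sub_distrib]
    simpa using sum_le_sum fun a (_ : a ∈ univ) => h a
  rw [← mul_sum, ← mul_sum, ← mul_sub, div_mul_eq_mul_div, one_mul, div_le_iff₀ (by positivity)]
  linarith

theorem inFP.avg_of_isGraphCover {α β κ : Type} [Fintype α] [Fintype β] [Fintype κ]
    [DecidableEq β] [DecidableEq κ] {Ht : Matrix (α × κ) (β × κ) ℤ} {H : Matrix α β ℤ}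
    {ω : β × κ → ℝ} (hω : inFP Ht ω) (hcover : IsGraphCover Ht H) :
    inFP H (fun i => 1 / (Fintype.card κ : ℝ) * ∑ b, ω (i, b)) := by
  obtain ⟨τ, hτ⟩ := hcover
  obtain ⟨hbox, hrow⟩ := hω
  refine ⟨fun i => avg_mem_Icc fun b => hbox (i, b), fun j S hS hodd => ?_⟩
  let lift (a : κ) : β ↪ β × κ := ⟨fun i => (i, τ j i a), fun _ _ h => congrArg Prod.fst h⟩
  have hlift : ∀ a i, lift a i = (i, τ j i a) := fun _ _ => rfl
  have hsupport : ∀ a, univ.filter (fun p => Ht (j, a) p = 1)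
      = (univ.filter fun i => H j i = 1).map (lift a) := fun a => by
    ext ⟨i, b⟩
    by_cases h : τ j i a = b <;> simp [hlift, hτ, h]
  have hS1 : 1 ≤ (S.card : ℝ) := by exact_mod_cast hodd.pos
  refine avg_sub_avg_le_of_perm (τ j) (by linarith) fun a => ?_
  have hlifted := hrow (j, a) (S.map (lift a)) (by simpa [hlift, hτ] using hS) (by simpa using hodd)
  rwa [hsupport, ← Finset.map_sdiff, sum_map, sum_map, card_map] at hlifted

/-- If `ω̃` is a pseudo-codeword of `H̃ = ∑_ℓ H_ℓ ⊗ P_ℓ`, then the averaged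
vector `ω_i = (1/M) ∑_b ω̃_{(i,b)}` is a pseudo-codeword of `H = ∑_ℓ H_ℓ`. -/
theorem pseudo_codeword_wraps
    {m n M : ℕ} {ι : Type} [Fintype ι]
    (H : Matrix (Fin m) (Fin n) ℤ)
    (Hl : ι → Matrix (Fin m) (Fin n) ℤ)
    (hH01 : ∀ j i, H j i = 0 ∨ H j i = 1)
    (hHl01 : ∀ ℓ j i, Hl ℓ j i = 0 ∨ Hl ℓ j i = 1)
    (hsum : H = ∑ ℓ, Hl ℓ)
    (σ : ι → Equiv.Perm (Fin M))
    (Htilde : Matrix (Fin m × Fin M) (Fin n × Fin M) ℤ)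
    (hHt : Htilde = ∑ ℓ, Matrix.kroneckerMap (· * ·) (Hl ℓ)
        (Matrix.of fun a b => if σ ℓ a = b then (1 : ℤ) else 0))
    (ωt : Fin n × Fin M → ℝ)
    (hωt : inFP Htilde ωt) :
    inFP H (fun i => (1 / (M : ℝ)) * ∑ b : Fin M, ωt (i, b)) := by
  have hcover : IsGraphCover Htilde H := hHt ▸ isGraphCover_sum_kronecker hH01 hHl01 hsum σ
  simpa only [Fintype.card_fin] using hωt.avg_of_isGraphCover hcover
end

section
/- Let ω̃ = (ω̃_{(i,b)})_{(i,b) ∈ I×M} be a vector of nonnegative real numbers indexed by a product of two nonempty finite index sets, with ω̃ not identically zero, and define ω = (ω_i)_{i∈I} by ω_i = (1/|M|) Σ_{b∈M} ω̃_{(i,b)}. Then the AWGNC pseudo-weight of ω̃ is at least the AWGNC pseudo-weight of ω, i.e., (Σ_{(i,b)} ω̃_{(i,b)})² / (Σ_{(i,b)} ω̃_{(i,b)}²) ≥ (Σ_i ω_i)² / (Σ_i ω_i²). -/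
/-- The AWGNC pseudo-weight `(∑ ω)² / (∑ ω²)` of a nonzero nonnegative vector
`ω̃` indexed by `I × M` is at least that of the averaged vector
`ω_i = (1/|M|) ∑_b ω̃_{(i,b)}`. -/
theorem awgnc_pseudo_weight_ge
    {I M : Type} [Fintype I] [Fintype M] [Nonempty I] [Nonempty M]
    (ωt : I × M → ℝ) (h0 : ∀ p, 0 ≤ ωt p) (hne : ωt ≠ 0) :
    (∑ i : I, ((1 / (Fintype.card M : ℝ)) * ∑ b : M, ωt (i, b))) ^ 2 /
        (∑ i : I, ((1 / (Fintype.card M : ℝ)) * ∑ b : M, ωt (i, b)) ^ 2)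
      ≤ (∑ p : I × M, ωt p) ^ 2 / (∑ p : I × M, ωt p ^ 2) := by
  set c : ℝ := 1 / (Fintype.card M : ℝ) with hc
  have hm : (0 : ℝ) < (Fintype.card M : ℝ) := by
    exact_mod_cast Fintype.card_pos
  have hcpos : 0 < c := by positivity
  set A : I → ℝ := fun i => ∑ b : M, ωt (i, b) with hA
  have h1 : (∑ i : I, c * A i) = c * ∑ i : I, A i := by
    rw [Finset.mul_sum]
  have h2 : (∑ i : I, (c * A i) ^ 2) = c ^ 2 * ∑ i : I, (A i) ^ 2 := by
    rw [Finset.mul_sum]; congr 1; ext i; ring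
  rw [h1, h2, mul_pow, mul_div_mul_left _ _ (by positivity : (c : ℝ) ^ 2 ≠ 0)]
  have hT : (∑ i : I, A i) = ∑ p : I × M, ωt p := by
    rw [Fintype.sum_prod_type]
  rw [hT]
  -- reduce to comparing denominators
  have hBle : (∑ p : I × M, ωt p ^ 2) ≤ ∑ i : I, (A i) ^ 2 := by
    rw [Fintype.sum_prod_type]
    apply Finset.sum_le_sum
    intro i _
    exact Finset.sum_sq_le_sq_sum_of_nonneg (fun b _ => h0 (i, b))
  have hBpos : 0 < ∑ p : I × M, ωt p ^ 2 := by
    obtain ⟨p, hp⟩ : ∃ p, ωt p ≠ 0 := by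
      by_contra h
      push_neg at h
      exact hne (funext h)
    apply Finset.sum_pos' (fun q _ => sq_nonneg _)
    exact ⟨p, Finset.mem_univ p, by positivity⟩
  exact div_le_div_of_nonneg_left (sq_nonneg _) hBpos hBle
end

section
/- Let H be an m×n matrix with entries in {0,1}, suppose H = Σ_{ℓ∈L} H_ℓ (as a sum of integer matrices) for a finite collection {H_ℓ}_{ℓ∈L} of m×n matrices with entries in {0,1}, let {P_ℓ}_{ℓ∈L} be a collection of M×M permutation matrices, and define H̃ = Σ_{ℓ∈L} H_ℓ ⊗ P_ℓ. Then for every nonzero pseudo-codeword ω̃ ∈ P(H̃) there exists a nonzero pseudo-codeword ω ∈ P(H) whose AWGNC pseudo-weight satisfies w_AWGNC(ω) ≤ w_AWGNC(ω̃). Consequently, the minimum AWGNC pseudo-weight of H̃ is at least the minimum AWGNC pseudo-weight of H. -/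
/-- For every nonzero pseudo-codeword `ω̃` of `H̃ = ∑_ℓ H_ℓ ⊗ P_ℓ` there is a
nonzero pseudo-codeword `ω` of `H = ∑_ℓ H_ℓ` whose AWGNC pseudo-weight
`(∑ ω)² / (∑ ω²)` is at most that of `ω̃`; consequently the minimum AWGNC
pseudo-weight of `H̃` is at least that of `H`. -/
theorem min_awgnc_pseudo_weight_ge
    {m n M : ℕ} {ι : Type} [Fintype ι]
    (H : Matrix (Fin m) (Fin n) ℤ)
    (Hl : ι → Matrix (Fin m) (Fin n) ℤ)
    (hH01 : ∀ j i, H j i = 0 ∨ H j i = 1)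
    (hHl01 : ∀ ℓ j i, Hl ℓ j i = 0 ∨ Hl ℓ j i = 1)
    (hsum : H = ∑ ℓ, Hl ℓ)
    (σ : ι → Equiv.Perm (Fin M))
    (Htilde : Matrix (Fin m × Fin M) (Fin n × Fin M) ℤ)
    (hHt : Htilde = ∑ ℓ, Matrix.kroneckerMap (· * ·) (Hl ℓ)
        (Matrix.of fun a b => if σ ℓ a = b then (1 : ℤ) else 0))
    (ωt : Fin n × Fin M → ℝ)
    (hωt : inFP Htilde ωt) (hne : ωt ≠ 0) :
    ∃ ω : Fin n → ℝ, inFP H ω ∧ ω ≠ 0 ∧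
      (∑ i, ω i) ^ 2 / (∑ i, ω i ^ 2)
        ≤ (∑ p, ωt p) ^ 2 / (∑ p, ωt p ^ 2) := by
  classical
  have hM : 0 < M := by
    rcases Nat.eq_zero_or_pos M with h | h
    · exact absurd (funext fun p => absurd p.2.2 (by omega)) hne
    · exact h
  have hMR : (0:ℝ) < (M:ℝ) := by exact_mod_cast hM
  have hnn : ∀ p, 0 ≤ ωt p := fun p => (hωt.1 p).1
  set ω : Fin n → ℝ := fun i => (∑ b, ωt (i, b)) / M with hωdef
  have hωnn : ∀ i, 0 ≤ ω i := fun i =>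
    div_nonneg (Finset.sum_nonneg fun b _ => hnn _) hMR.le
  -- sum decomposition facts about entries
  have hsum' : ∀ j i, H j i = ∑ ℓ, Hl ℓ j i := by
    intro j i; rw [hsum]; simp [Matrix.sum_apply]
  have hzero : ∀ j i, H j i = 0 → ∀ ℓ, Hl ℓ j i = 0 := by
    intro j i h0 ℓ
    have h1 := hsum' j i
    have h2 : Hl ℓ j i ≤ ∑ ℓ', Hl ℓ' j i :=
      Finset.single_le_sum (f := fun ℓ => Hl ℓ j i)
        (fun ℓ' _ => by rcases hHl01 ℓ' j i with h|h <;> simp [h])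
        (Finset.mem_univ ℓ)
    rcases hHl01 ℓ j i with h|h
    · exact h
    · omega
  have hent : ∀ j a i b, Htilde (j,a) (i,b)
      = ∑ ℓ, Hl ℓ j i * (if σ ℓ a = b then (1:ℤ) else 0) := by
    intro j a i b
    rw [hHt]
    simp [Matrix.sum_apply, Matrix.kroneckerMap]
  have hex1 : ∀ j i, H j i = 1 → ∃ ℓ, Hl ℓ j i = 1 := by
    intro j i hi
    by_contra h
    push_neg at h
    rw [hsum' j i, Finset.sum_eq_zero fun ℓ _ => (hHl01 ℓ j i).resolve_right (h ℓ)] at hi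
    exact one_ne_zero hi.symm
  -- main positivity and weight facts come after the FP membership proof
  refine ⟨ω, ⟨?_, ?_⟩, ?_, ?_⟩
  · -- 0 ≤ ω ≤ 1
    intro i
    refine ⟨hωnn i, ?_⟩
    have h1 : (∑ b, ωt (i, b)) ≤ (M:ℝ) := by
      calc (∑ b, ωt (i, b)) ≤ ∑ _b : Fin M, (1:ℝ) :=
            Finset.sum_le_sum fun b _ => (hωt.1 (i,b)).2
        _ = (M:ℝ) := by simp
    rw [hωdef]
    exact div_le_one_of_le₀ h1 hMR.le
  · -- row constraints
    intro j S hS hodd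
    -- the permutation attached to each column
    set f : Fin n → Equiv.Perm (Fin M) :=
      fun i => if h : ∃ ℓ, Hl ℓ j i = 1 then σ h.choose else 1 with hfdef
    have hrow : ∀ i, H j i = 1 → ∀ a b,
        Htilde (j,a) (i,b) = if f i a = b then 1 else 0 := by
      intro i hi a b
      have hex : ∃ ℓ, Hl ℓ j i = 1 := hex1 j i hi
      have hℓ0 : Hl hex.choose j i = 1 := hex.choose_spec
      have hothers : ∀ ℓ, ℓ ≠ hex.choose → Hl ℓ j i = 0 := by
        intro ℓ hℓ
        by_contra h
        have h1 : Hl ℓ j i = 1 := (hHl01 ℓ j i).resolve_left h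
        have hdec : ∑ ℓ', Hl ℓ' j i
            = Hl hex.choose j i + ∑ ℓ' ∈ Finset.univ.erase hex.choose, Hl ℓ' j i :=
          (Finset.add_sum_erase _ _ (Finset.mem_univ _)).symm
        have h2 : Hl ℓ j i ≤ ∑ ℓ' ∈ Finset.univ.erase hex.choose, Hl ℓ' j i :=
          Finset.single_le_sum (f := fun ℓ => Hl ℓ j i)
            (fun ℓ' _ => by rcases hHl01 ℓ' j i with h'|h' <;> simp [h'])
            (Finset.mem_erase.mpr ⟨hℓ, Finset.mem_univ ℓ⟩)
        have h3 := hsum' j i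
        omega
      rw [hent]
      rw [Finset.sum_eq_single hex.choose
        (fun ℓ _ hℓ => by rw [hothers ℓ hℓ, zero_mul])
        (fun h => absurd (Finset.mem_univ _) h)]
      rw [hℓ0, one_mul, hfdef]
      simp only [dif_pos hex]
    have hrow0 : ∀ i, H j i = 0 → ∀ a b, Htilde (j,a) (i,b) = 0 := by
      intro i hi a b
      rw [hent]
      exact Finset.sum_eq_zero fun ℓ _ => by rw [hzero j i hi ℓ, zero_mul]
    have hinj : ∀ a : Fin M, Function.Injective (fun i : Fin n => (i, f i a)) :=
      fun a i i' h => congrArg Prod.fst h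
    have hN : ∀ a : Fin M,
        (Finset.univ.filter fun p => Htilde (j,a) p = 1)
          = (Finset.univ.filter fun i => H j i = 1).image (fun i => (i, f i a)) := by
      intro a
      ext ⟨i, b⟩
      simp only [Finset.mem_filter, Finset.mem_image, Finset.mem_univ, true_and]
      constructor
      · intro h
        rcases hH01 j i with h0 | h1
        · rw [hrow0 i h0 a b] at h; exact absurd h (by norm_num)
        · refine ⟨i, h1, ?_⟩
          rw [hrow i h1 a b] at h
          by_cases hb : f i a = b
          · exact Prod.ext rfl hb
          · rw [if_neg hb] at h; norm_num at h
      · rintro ⟨i', h1, heq⟩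
        obtain ⟨rfl, rfl⟩ : i' = i ∧ f i' a = b :=
          ⟨congrArg Prod.fst heq, congrArg Prod.snd heq⟩
        rw [hrow i' h1]
        simp
    -- the per-layer inequality
    have key : ∀ a : Fin M,
        (∑ i ∈ S, ωt (i, f i a))
          - (∑ i ∈ (Finset.univ.filter fun i => H j i = 1) \ S, ωt (i, f i a))
          ≤ (S.card : ℝ) - 1 := by
      intro a
      have h1 : ∀ p ∈ S.image (fun i => (i, f i a)), Htilde (j,a) p = 1 := by
        intro p hp
        obtain ⟨i, hi, rfl⟩ := Finset.mem_image.mp hp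
        rw [hrow i (hS i hi)]
        simp
      have hcard : (S.image (fun i => (i, f i a))).card = S.card :=
        Finset.card_image_of_injective _ (hinj a)
      have h2 := hωt.2 (j,a) (S.image (fun i => (i, f i a))) h1 (hcard ▸ hodd)
      rw [hN a, ← Finset.image_sdiff _ _ (hinj a), hcard,
        Finset.sum_image (fun x _ y _ h => hinj a h),
        Finset.sum_image (fun x _ y _ h => hinj a h)] at h2
      exact h2
    -- sum over a and divide by M
    have hsumM : ∀ (T : Finset (Fin n)),
        ∑ a : Fin M, ∑ i ∈ T, ωt (i, f i a) = (M:ℝ) * ∑ i ∈ T, ω i := by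
      intro T
      rw [Finset.sum_comm]
      rw [Finset.mul_sum]
      refine Finset.sum_congr rfl fun i _ => ?_
      have : ∑ a : Fin M, ωt (i, f i a) = ∑ b : Fin M, ωt (i, b) :=
        Equiv.sum_comp (f i) (fun b => ωt (i, b))
      rw [this, hωdef]
      field_simp
    have hbig : (M:ℝ) * ((∑ i ∈ S, ω i)
        - ∑ i ∈ (Finset.univ.filter fun i => H j i = 1) \ S, ω i)
        ≤ (M:ℝ) * ((S.card : ℝ) - 1) := by
      have := Finset.sum_le_sum (s := Finset.univ) fun a _ => key a
      rw [Finset.sum_sub_distrib, hsumM, hsumM] at this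
      simpa [mul_sub, Finset.sum_const, nsmul_eq_mul, mul_comm] using this
    exact le_of_mul_le_mul_left hbig hMR
  · -- ω ≠ 0
    obtain ⟨p, hp⟩ := Function.ne_iff.mp hne
    have hp' : 0 < ωt p := lt_of_le_of_ne (hnn p) (by simpa [eq_comm] using hp)
    have hwp : 0 < ω p.1 := by
      have h1 : ωt p ≤ ∑ b, ωt (p.1, b) :=
        Finset.single_le_sum (f := fun b => ωt (p.1, b))
          (fun b _ => hnn _) (Finset.mem_univ p.2)
      have : 0 < ∑ b, ωt (p.1, b) := lt_of_lt_of_le hp' h1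
      exact div_pos this hMR
    intro h
    rw [h] at hwp
    exact lt_irrefl _ hwp
  · -- weight comparison
    have hQpos : 0 < ∑ p, ωt p ^ 2 := by
      obtain ⟨p, hp⟩ := Function.ne_iff.mp hne
      exact Finset.sum_pos' (fun q _ => sq_nonneg _)
        ⟨p, Finset.mem_univ p, pow_pos (lt_of_le_of_ne (hnn p) (Ne.symm hp)) 2⟩
    have hT : (∑ i, ω i) = (∑ p, ωt p) / M := by
      rw [hωdef, ← Finset.sum_div, Fintype.sum_prod_type]
    have hQD : (∑ p, ωt p ^ 2) / (M:ℝ)^2 ≤ ∑ i, ω i ^ 2 := by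
      rw [Fintype.sum_prod_type, Finset.sum_div]
      refine Finset.sum_le_sum fun i _ => ?_
      calc (∑ b, ωt (i, b) ^ 2) / (M:ℝ)^2
          ≤ (∑ b, ωt (i, b)) ^ 2 / (M:ℝ)^2 := by
            gcongr
            exact Finset.sum_sq_le_sq_sum_of_nonneg fun b _ => hnn _
        _ = ω i ^ 2 := by simp only [hωdef]; rw [div_pow]
    have hDpos : 0 < ∑ i, ω i ^ 2 :=
      lt_of_lt_of_le (by positivity) hQD
    rw [hT, div_pow, div_div]
    refine div_le_div_of_nonneg_left (sq_nonneg _) hQpos ?_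
    calc (∑ p, ωt p ^ 2) = ((∑ p, ωt p ^ 2) / (M:ℝ)^2) * (M:ℝ)^2 := by
          field_simp
      _ ≤ (∑ i, ω i ^ 2) * (M:ℝ)^2 := by
          exact mul_le_mul_of_nonneg_right hQD (by positivity)
      _ = (M:ℝ)^2 * (∑ i, ω i ^ 2) := mul_comm _ _
end

section
/- Let r be a positive integer, H(X) an m×n matrix over F₂[X], and π : F₂[X] → F₂[X]/(X^r − 1) the canonical quotient homomorphism applied entrywise. Let d denote the minimum weight of a nonzero codeword of the quasi-cyclic code C_QC = {w ∈ (F₂[X]/(X^r − 1))^n : π(H)·wᵀ = 0}, where the weight of an element of F₂[X]/(X^r − 1) is the number of nonzero coefficients of its unique representative of degree less than r. Then every v(X) ∈ F₂[X]^n with H(X)·v(X)ᵀ = 0 whose entrywise reduction π(v) is nonzero satisfies wt(v) ≥ d, where wt(v) is the total number of nonzero coefficients over all entries of v. In particular, the free distance of the unwrapped convolutional code, restricted to codewords with nonzero wrap, is at least the minimum distance of the underlying quasi-cyclic code. -/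
/-!
Reducing `v` entrywise modulo `X ^ r - 1` gives the degree `< r` representative of its wrap,
which is a nonzero codeword of the quasi-cyclic code, so its weight is at least `d`. Since
`X ^ r ≡ 1`, the reduction sends the monomial `a X ^ k` to `a X ^ (k % r)`: it can only merge
or cancel coefficients of `v`, never create new ones, so the weight does not increase.
-/

open Polynomial Matrix

namespace Polynomial

variable {R : Type*} [CommRing R]

theorem X_pow_sub_one_dvd_monomial_sub_monomial_mod (r k : ℕ) (a : R) :
    (X ^ r - 1 : R[X]) ∣ monomial k a - monomial (k % r) a := by
  have hk : (monomial k a : R[X]) = monomial (k % r) a * (X ^ r) ^ (k / r) := by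
    rw [← pow_mul, monomial_mul_X_pow, Nat.mod_add_div]
  have hdvd : (X ^ r - 1 : R[X]) ∣ (X ^ r) ^ (k / r) - 1 := by
    simpa using sub_dvd_pow_sub_pow (X ^ r : R[X]) 1 (k / r)
  rw [hk, ← mul_sub_one]
  exact hdvd.mul_left _

variable {r : ℕ}

theorem monic_X_pow_sub_one (hr : 0 < r) : (X ^ r - 1 : R[X]).Monic :=
  monic_X_pow_sub_C 1 hr.ne'

variable [Nontrivial R]

theorem degree_X_pow_sub_one (hr : 0 < r) : (X ^ r - 1 : R[X]).degree = r := by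
  simpa using degree_X_pow_sub_C hr (1 : R)

theorem monomial_modByMonic_X_pow_sub_one (hr : 0 < r) (k : ℕ) (a : R) :
    monomial k a %ₘ (X ^ r - 1) = monomial (k % r) a := by
  have hq := monic_X_pow_sub_one (R := R) hr
  rw [modByMonic_eq_of_dvd_sub hq (X_pow_sub_one_dvd_monomial_sub_monomial_mod r k a)]
  refine (modByMonic_eq_self_iff hq).2 ?_
  rw [degree_X_pow_sub_one hr]
  exact (degree_monomial_le _ _).trans_lt (by exact_mod_cast Nat.mod_lt k hr)

theorem modByMonic_X_pow_sub_one_eq_sum (hr : 0 < r) (p : R[X]) :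
    p %ₘ (X ^ r - 1) = ∑ k ∈ p.support, monomial (k % r) (p.coeff k) := by
  conv_lhs => rw [p.as_sum_support]
  rw [← modByMonicHom_apply, map_sum]
  simp only [modByMonicHom_apply, monomial_modByMonic_X_pow_sub_one hr]

theorem support_modByMonic_X_pow_sub_one_subset (hr : 0 < r) (p : R[X]) :
    (p %ₘ (X ^ r - 1)).support ⊆ p.support.image (· % r) := by
  intro i hi
  rw [mem_support_iff, modByMonic_X_pow_sub_one_eq_sum hr, finsetSum_coeff] at hi
  obtain ⟨k, hk, hki⟩ := Finset.exists_ne_zero_of_sum_ne_zero hi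
  rw [coeff_monomial] at hki
  exact Finset.mem_image.2 ⟨k, hk, by_contra fun h ↦ hki (if_neg h)⟩

theorem card_support_modByMonic_X_pow_sub_one_le (hr : 0 < r) (p : R[X]) :
    (p %ₘ (X ^ r - 1)).support.card ≤ p.support.card :=
  (Finset.card_le_card (support_modByMonic_X_pow_sub_one_subset hr p)).trans
    Finset.card_image_le

end Polynomial

theorem Matrix.dvd_mulVec_apply_of_forall_dvd {m n R : Type*} [Fintype n] [CommSemiring R]
    (H : Matrix m n R) {q : R} {u : n → R} (hu : ∀ i, q ∣ u i) (j : m) :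
    q ∣ (H *ᵥ u) j :=
  Finset.dvd_sum fun i _ ↦ (hu i).mul_left _

/-- Let `d` be the minimum weight of a nonzero codeword of the quasi-cyclic
code `C_QC` (codewords represented by their unique vectors of polynomials of
degree `< r`, annihilated by `H` modulo `X^r − 1`).  Then every codeword `v(X)`
of the unwrapped convolutional code `{v : H(X)·vᵀ = 0}` whose reduction modulo
`X^r − 1` is nonzero (i.e. some entry of `v` is not divisible by `X^r − 1`)
has weight at least `d`. -/
theorem free_distance_ge_min_distance
    {m n r : ℕ} (hr : 0 < r)
    (H : Matrix (Fin m) (Fin n) (Polynomial (ZMod 2))) (d : ℕ)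
    (hd : IsLeast {k : ℕ | ∃ w : Fin n → Polynomial (ZMod 2),
        (∀ i, (w i).degree < (r : WithBot ℕ)) ∧
        (∀ j, (Polynomial.X ^ r - 1) ∣ H.mulVec w j) ∧
        w ≠ 0 ∧ k = ∑ i, (w i).support.card} d)
    (v : Fin n → Polynomial (ZMod 2))
    (hv : H.mulVec v = 0)
    (hwrap : ∃ i, ¬ (Polynomial.X ^ r - 1) ∣ v i) :
    d ≤ ∑ i, (v i).support.card := by
  have hq : (X ^ r - 1 : (ZMod 2)[X]).Monic := monic_X_pow_sub_one hr
  have hdeg : (X ^ r - 1 : (ZMod 2)[X]).degree = r := degree_X_pow_sub_one hr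
  set w : Fin n → (ZMod 2)[X] := fun i ↦ v i %ₘ (X ^ r - 1)
  have hw_codeword (j : Fin m) : (X ^ r - 1 : (ZMod 2)[X]) ∣ (H *ᵥ w) j := by
    have hHw : H *ᵥ w = H *ᵥ (w - v) := by rw [Matrix.mulVec_sub, hv, sub_zero]
    rw [hHw]
    exact H.dvd_mulVec_apply_of_forall_dvd (fun i ↦ dvd_modByMonic_sub (v i) _) j
  have hw_ne : w ≠ 0 := by
    obtain ⟨i, hi⟩ := hwrap
    exact fun hw ↦ hi ((modByMonic_eq_zero_iff_dvd hq).1 (congrFun hw i))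
  calc d ≤ ∑ i, (w i).support.card :=
        hd.2 ⟨w, fun i ↦ hdeg ▸ degree_modByMonic_lt _ hq, hw_codeword, hw_ne, rfl⟩
    _ ≤ ∑ i, (v i).support.card :=
        Finset.sum_le_sum fun i _ ↦ card_support_modByMonic_X_pow_sub_one_le hr (v i)
end

section
/- Let H be an m×n matrix with entries in {0,1} and let ω ∈ P(H) be a pseudo-codeword of H. Then the support of ω is a stopping set of H: for every row index j such that N(j) ∩ supp(ω) is nonempty, one has |N(j) ∩ supp(ω)| ≥ 2, where supp(ω) = {i : ω_i ≠ 0}. -/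
/-- The support of a pseudo-codeword `ω ∈ P(H)` is a stopping set of `H`:
every row whose support meets `supp(ω)` meets it in at least two positions. -/
theorem support_pseudocodeword_stopping_set
    {m n : ℕ} (H : Matrix (Fin m) (Fin n) ℤ)
    (hH01 : ∀ j i, H j i = 0 ∨ H j i = 1)
    (ω : Fin n → ℝ) (hω : inFP H ω) :
    ∀ j : Fin m, (∃ i, H j i = 1 ∧ ω i ≠ 0) →
      2 ≤ (Finset.univ.filter fun i => H j i = 1 ∧ ω i ≠ 0).card := by
  intro j ⟨i₀, hi₀H, hi₀ω⟩
  set T := Finset.univ.filter fun i => H j i = 1 ∧ ω i ≠ 0 with hT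
  have hi₀T : i₀ ∈ T := by simp [hT, hi₀H, hi₀ω]
  by_contra hlt
  push_neg at hlt
  have hcard : T.card = 1 := by
    have : 1 ≤ T.card := Finset.card_pos.mpr ⟨i₀, hi₀T⟩
    omega
  have hTeq : T = {i₀} := Finset.eq_singleton_iff_unique_mem.mpr
    ⟨hi₀T, fun x hx => by
      rcases Finset.card_eq_one.mp hcard with ⟨a, ha⟩
      rw [ha] at hx hi₀T
      simp only [Finset.mem_singleton] at hx hi₀T
      rw [hx, hi₀T]⟩
  have hkey := hω.2 j {i₀} (by simpa using hi₀H) (by simp)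
  have hzero : ∀ i ∈ (Finset.univ.filter fun i => H j i = 1) \ ({i₀} : Finset (Fin n)), ω i = 0 := by
    intro i hi
    simp only [Finset.mem_sdiff, Finset.mem_filter, Finset.mem_univ, true_and,
      Finset.mem_singleton] at hi
    by_contra hne
    have : i ∈ T := by simp [hT, hi.1, hne]
    rw [hTeq] at this
    simp only [Finset.mem_singleton] at this
    exact hi.2 this
  rw [Finset.sum_singleton, Finset.sum_eq_zero hzero] at hkey
  simp at hkey
  have h0 := (hω.1 i₀).1
  have : ω i₀ = 0 := le_antisymm hkey h0
  exact hi₀ω this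
end

section
/- Let H be an m×n matrix with entries in {0,1}, and let ω ∈ P(H) be a nonzero pseudo-codeword such that every column index i ∈ supp(ω) has column weight at least 2 in H (i.e., no active variable node has degree one). Then the Tanner graph of H contains a cycle all of whose variable-node vertices belong to supp(ω); in particular, the active part of any nonzero pseudo-codeword contains at least one cycle or at least one degree-one variable node. -/
/-- The Tanner graph of `H`: a bipartite simple graph on variable nodes
`Fin n` (left) and check nodes `Fin m` (right), with `i` adjacent to `j`
iff `H j i = 1`. -/
def tannerGraph {m n : ℕ} (H : Matrix (Fin m) (Fin n) ℤ) :
    SimpleGraph (Fin n ⊕ Fin m) :=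
  SimpleGraph.fromRel fun x y =>
    match x, y with
    | Sum.inl i, Sum.inr j => H j i = 1
    | _, _ => False

/-!
Delete from the Tanner graph the variable nodes outside `supp ω`. In what remains every
non-isolated vertex has degree at least two: for variable nodes this is the column-weight
hypothesis, and for a check node `j` adjacent to an active variable `i` the inequality of `P(H)`
with `S = {i}` reads `ω i ≤ ∑_{i' ∈ N(j) \ {i}} ω i'`, so `j` has a second active neighbour.
The end vertex of a longest path in such a graph has a neighbour other than its predecessor,
which must already lie on the path; hence the graph is not a forest.
-/

open SimpleGraph

namespace SimpleGraph

variable {V : Type*} {G : SimpleGraph V}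

theorem not_isAcyclic_of_forall_adj_exists_adj_ne [Finite V] {a b : V} (hab : G.Adj a b)
    (hG : ∀ x y, G.Adj x y → ∃ z, G.Adj x z ∧ z ≠ y) : ¬G.IsAcyclic := by
  classical
  intro hacyc
  have := Fintype.ofFinite V
  have : Nonempty (Σ u v : V, G.Path u v) := ⟨⟨a, b, Path.singleton hab⟩⟩
  obtain ⟨⟨u, v, p⟩, hmax⟩ :=
    Finite.exists_max fun q : Σ u v : V, G.Path u v => (q.2.2 : G.Walk q.1 q.2.1).length
  have hp : ¬(p : G.Walk u v).Nil := by
    intro hnil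
    simpa [Walk.length_eq_zero_iff.mpr hnil] using hmax ⟨a, b, Path.singleton hab⟩
  obtain ⟨z, hvz, hz⟩ := hG v _ (Walk.adj_penultimate hp).symm
  by_cases hzp : z ∈ (p : G.Walk u v).support
  · exact hz (hacyc.eq_penultimate_of_adj_end p.2 hvz hzp)
  · simpa using hmax ⟨u, z, ⟨_, p.2.concat hzp hvz⟩⟩

end SimpleGraph

theorem inFP.apply_le_sum_sdiff {α β : Type} [Fintype α] [Fintype β] [DecidableEq β]
    {H : Matrix α β ℤ} {ω : β → ℝ} (hω : inFP H ω) {j : α} {i : β} (hji : H j i = 1) :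
    ω i ≤ ∑ i' ∈ (Finset.univ.filter fun i' => H j i' = 1) \ {i}, ω i' := by
  have := hω.2 j {i} (by simpa using hji) (by simp)
  simp only [Finset.sum_singleton, Finset.card_singleton, Nat.cast_one, sub_self] at this
  linarith

theorem inFP.exists_ne_of_apply_ne_zero {α β : Type} [Fintype α] [Fintype β] [DecidableEq β]
    {H : Matrix α β ℤ} {ω : β → ℝ} (hω : inFP H ω) {j : α} {i : β} (hji : H j i = 1)
    (hi : ω i ≠ 0) : ∃ i', i' ≠ i ∧ H j i' = 1 ∧ ω i' ≠ 0 := by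
  have hpos : 0 < ω i := lt_of_le_of_ne (hω.1 i).1 hi.symm
  obtain ⟨i', hi', hne⟩ :=
    Finset.exists_ne_zero_of_sum_ne_zero (hpos.trans_le (hω.apply_le_sum_sdiff hji)).ne'
  simp only [Finset.mem_sdiff, Finset.mem_filter, Finset.mem_univ, true_and,
    Finset.mem_singleton] at hi'
  exact ⟨i', hi'.2, hi'.1, hne⟩

section TannerGraph

variable {m n : ℕ} {H : Matrix (Fin m) (Fin n) ℤ}

@[simp]
theorem tannerGraph_adj_inl_inr {i : Fin n} {j : Fin m} :
    (tannerGraph H).Adj (.inl i) (.inr j) ↔ H j i = 1 := by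
  simp [tannerGraph]

@[simp]
theorem tannerGraph_adj_inr_inl {i : Fin n} {j : Fin m} :
    (tannerGraph H).Adj (.inr j) (.inl i) ↔ H j i = 1 := by
  simp [tannerGraph]

@[simp]
theorem tannerGraph_not_adj_inl_inl {i i' : Fin n} : ¬(tannerGraph H).Adj (.inl i) (.inl i') := by
  simp [tannerGraph]

@[simp]
theorem tannerGraph_not_adj_inr_inr {j j' : Fin m} : ¬(tannerGraph H).Adj (.inr j) (.inr j') := by
  simp [tannerGraph]

def activeNodes (m : ℕ) (ω : Fin n → ℝ) : Set (Fin n ⊕ Fin m) :=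
  {x | x.elim (fun i => ω i ≠ 0) fun _ => True}

theorem induce_activeNodes_exists_adj_ne {ω : Fin n → ℝ} (hω : inFP H ω)
    (hdeg : ∀ i : Fin n, ω i ≠ 0 → 2 ≤ (Finset.univ.filter fun j => H j i = 1).card)
    (x y : activeNodes m ω) (hxy : ((tannerGraph H).induce (activeNodes m ω)).Adj x y) :
    ∃ z, ((tannerGraph H).induce (activeNodes m ω)).Adj x z ∧ z ≠ y := by
  rcases x with ⟨i | j, hx⟩ <;> rcases y with ⟨i' | j', hy⟩ <;>
    simp only [induce_adj, tannerGraph_adj_inl_inr, tannerGraph_adj_inr_inl,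
      tannerGraph_not_adj_inl_inl, tannerGraph_not_adj_inr_inr] at hxy
  · obtain ⟨j'', hj'', hne⟩ := Finset.exists_mem_ne (hdeg i hx) j'
    exact ⟨⟨.inr j'', trivial⟩, by simpa using hj'', by simpa [Subtype.ext_iff] using hne⟩
  · obtain ⟨i'', hne, hH, hi''⟩ := hω.exists_ne_of_apply_ne_zero hxy hy
    exact ⟨⟨.inl i'', hi''⟩, by simpa using hH, by simpa [Subtype.ext_iff] using hne⟩

end TannerGraph

theorem active_part_contains_cycle_general
    {m n : ℕ} (H : Matrix (Fin m) (Fin n) ℤ)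
    (ω : Fin n → ℝ) (hω : inFP H ω) (hne : ω ≠ 0)
    (hdeg : ∀ i : Fin n, ω i ≠ 0 →
      2 ≤ (Finset.univ.filter fun j => H j i = 1).card) :
    ∃ (v : Fin n ⊕ Fin m) (w : (tannerGraph H).Walk v v),
      w.IsCycle ∧ ∀ i : Fin n, Sum.inl i ∈ w.support → ω i ≠ 0 := by
  obtain ⟨i, hi⟩ : ∃ i, ω i ≠ 0 := Function.ne_iff.mp hne
  obtain ⟨j, hj⟩ := Finset.card_pos.mp (zero_lt_two.trans_le (hdeg i hi))
  have hij : ((tannerGraph H).induce (activeNodes m ω)).Adj ⟨.inl i, hi⟩ ⟨.inr j, trivial⟩ := by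
    simpa using hj
  obtain ⟨v, c, hc⟩ : ∃ (v : activeNodes m ω)
      (c : ((tannerGraph H).induce (activeNodes m ω)).Walk v v), c.IsCycle := by
    simpa only [IsAcyclic, not_forall, not_not] using
      not_isAcyclic_of_forall_adj_exists_adj_ne hij (induce_activeNodes_exists_adj_ne hω hdeg)
  let f := Embedding.induce (G := tannerGraph H) (activeNodes m ω)
  refine ⟨_, c.map f.toHom, hc.map f.injective, ?_⟩
  intro i hi
  rw [Walk.support_map, List.mem_map] at hi
  obtain ⟨⟨x, hx⟩, -, rfl⟩ := hi
  exact hx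

/-- If `ω` is a nonzero pseudo-codeword of `H` and every variable node in the
support of `ω` has degree at least `2` in the Tanner graph of `H`, then the
Tanner graph contains a cycle all of whose variable nodes lie in `supp(ω)`
(i.e. the active part of the pseudo-codeword contains a cycle). -/
theorem active_part_contains_cycle
    {m n : ℕ} (H : Matrix (Fin m) (Fin n) ℤ)
    (hH01 : ∀ j i, H j i = 0 ∨ H j i = 1)
    (ω : Fin n → ℝ) (hω : inFP H ω) (hne : ω ≠ 0)
    (hdeg : ∀ i : Fin n, ω i ≠ 0 →
      2 ≤ (Finset.univ.filter fun j => H j i = 1).card) :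
    ∃ (v : Fin n ⊕ Fin m) (w : (tannerGraph H).Walk v v),
      w.IsCycle ∧ ∀ i : Fin n, Sum.inl i ∈ w.support → ω i ≠ 0 :=
  active_part_contains_cycle_general H ω hω hne hdeg
end
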